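/- For any fixed θ ∈ (0,1) with 2θ/(1-θ) < ε and ε > 0, the quantity ∫∫_ℂ ∫∫_ℂ |K_λ(z,ξ) - K_0(z,ξ)|² dz dξ tends to 0 as |λ| → 0, where K_λ(z,ξ) = (g^r(z-ξ,λ) - (1/(16π))ln|z-ξ|²) · v(ξ)(1+|ξ|)^{3+ε/2}(1+|z|)^{-(3+ε/2)} with K_0 = 0; i.e. the Hilbert–Schmidt norm of the kernel difference between H^r(λ) and H^r(0) tends to zero, given the pointwise bounds: |g^r(z-ξ,λ) - (1/(16π))ln|z-ξ|²| ≤ C(|λ||z-ξ||ln|z-ξ|²| + |λ||z-ξ||ln|λ|²| + |λ|(1+|z-ξ|)) when |z-ξ| ≤ 1; ≤ C(|λ|^θ ln|z-ξ|² + |λ|^θ|ln|λ|²| + |λ|^θ) when |z-ξ| > 1 and |λ|^{1-θ}|z-ξ| ≤ 1; and ≤ C(|z-ξ|^{θ/(1-θ)} + ln|z-ξ|² + (2/(1-θ))|ln|z-ξ||) when |z-ξ| > 1 and |λ|^{1-θ}|z-ξ| > 1; and where |v(ξ)| ≤ q(1+|ξ|)^{-4-ε}. -/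

import Mathlib

/-!
Write `s = θ / (1 - θ)`. For `0 < |λ| ≤ 1` the three regional bounds combine into the
`λ`-uniform bound `|g(λ, w) - logKer w| ≤ K (1 + |w|^s)`. Since `|z - ξ| ≤ (1 + |z|)(1 + |ξ|)`
and `|v(ξ)| ≤ q (1 + |ξ|)^(-4-ε)`, the integrand `|K_λ(z, ξ)|²` is then dominated by
`(1 + |z|)^(2s-6-ε) (1 + |ξ|)^(2s-2-ε)`, which is integrable on `ℂ × ℂ` because `2s < ε`.
For fixed `w ≠ 0`, only the first two bounds are relevant once `|λ|` is small, and they tend to `0`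
with `|λ|`; dominated convergence finishes the proof.
-/

open MeasureTheory

noncomputable def logKer (w : ℂ) : ℂ :=
  ((1 / (16 * Real.pi) * Real.log (‖w‖ ^ 2) : ℝ) : ℂ)

open Filter Topology Real

lemma abs_log_sq (a : ℝ) : |log (a ^ 2)| = 2 * |log a| := by
  rw [log_pow, abs_mul]; norm_num

lemma rpow_mul_abs_log_le {a θ : ℝ} (ha0 : 0 < a) (ha1 : a ≤ 1) (hθ : 0 < θ) :
    a ^ θ * |log a| ≤ 1 / θ := by
  have h := abs_log_mul_self_lt _ (rpow_pos_of_pos ha0 θ) (rpow_le_one ha0.le ha1 hθ.le)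
  rw [log_rpow ha0, abs_mul, abs_mul, abs_of_pos hθ, abs_of_pos (rpow_pos_of_pos ha0 θ)] at h
  rw [le_div_iff₀ hθ]
  linarith

lemma nearRegion_le {a W : ℝ} (ha0 : 0 < a) (ha1 : a ≤ 1) (hW0 : 0 < W) (hW1 : W ≤ 1) :
    a * W * |log (W ^ 2)| + a * W * |log (a ^ 2)| + a * (1 + W) ≤ 6 := by
  have hW := abs_log_mul_self_lt W hW0 hW1
  have ha := abs_log_mul_self_lt a ha0 ha1
  rw [abs_mul, abs_of_pos hW0] at hW
  rw [abs_mul, abs_of_pos ha0] at ha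
  rw [abs_log_sq, abs_log_sq]
  nlinarith [abs_nonneg (log W), abs_nonneg (log a)]

lemma midRegion_le {a W θ : ℝ} (ha0 : 0 < a) (ha1 : a ≤ 1) (hθ0 : 0 < θ) (hW : 1 ≤ W)
    (haW : a ^ (1 - θ) * W ≤ 1) :
    a ^ θ * log (W ^ 2) + a ^ θ * |log (a ^ 2)| + a ^ θ ≤ 1 + 4 / θ := by
  have hloga : log a ≤ 0 := log_nonpos ha0.le ha1
  have hlogW : log W ≤ |log a| := by
    have h := log_le_log (by positivity) haW
    rw [log_one, log_mul (rpow_pos_of_pos ha0 _).ne' (by positivity), log_rpow ha0] at h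
    rw [abs_of_nonpos hloga]
    nlinarith
  have haθ : a ^ θ ≤ 1 := rpow_le_one ha0.le ha1 hθ0.le
  have hθlog := rpow_mul_abs_log_le ha0 ha1 hθ0
  have hθlogW : a ^ θ * log W ≤ 1 / θ :=
    (mul_le_mul_of_nonneg_left hlogW (by positivity)).trans hθlog
  rw [log_pow, abs_log_sq]
  calc a ^ θ * ((2 : ℕ) * log W) + a ^ θ * (2 * |log a|) + a ^ θ
      = 2 * (a ^ θ * log W) + 2 * (a ^ θ * |log a|) + a ^ θ := by push_cast; ring
    _ ≤ 2 * (1 / θ) + 2 * (1 / θ) + 1 := by gcongr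
    _ = 1 + 4 / θ := by ring

lemma farRegion_le {W s c : ℝ} (hW : 1 ≤ W) (hs : 0 < s) (hc : 0 ≤ c) :
    W ^ s + log (W ^ 2) + c * |log W| ≤ (1 + (2 + c) / s) * W ^ s := by
  have hlog : log W ≤ W ^ s / s := log_le_rpow_div (by linarith) hs
  rw [log_pow, abs_of_nonneg (log_nonneg hW)]
  have : (1 + (2 + c) / s) * W ^ s = W ^ s + (2 + c) * (W ^ s / s) := by ring
  rw [this]
  push_cast
  nlinarith

lemma exists_le_mul_one_add_rpow {C θ : ℝ} (hC : 0 ≤ C) (hθ0 : 0 < θ) (hθ1 : θ < 1) :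
    ∃ K, 0 ≤ K ∧ ∀ a W D : ℝ, 0 < a → a ≤ 1 → 0 < W →
      (W ≤ 1 → D ≤ C * (a * W * |log (W ^ 2)| + a * W * |log (a ^ 2)| + a * (1 + W))) →
      (1 < W → a ^ (1 - θ) * W ≤ 1 →
        D ≤ C * (a ^ θ * log (W ^ 2) + a ^ θ * |log (a ^ 2)| + a ^ θ)) →
      (1 < W → 1 < a ^ (1 - θ) * W →
        D ≤ C * (W ^ (θ / (1 - θ)) + log (W ^ 2) + 2 / (1 - θ) * |log W|)) →
      D ≤ K * (1 + W ^ (θ / (1 - θ))) := by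
  set s := θ / (1 - θ)
  have hs : 0 < s := div_pos hθ0 (by linarith)
  have hc : 0 ≤ 2 / (1 - θ) := div_nonneg zero_le_two (by linarith)
  set K₀ := 6 + 4 / θ + (2 + 2 / (1 - θ)) / s
  have h4θ : 0 ≤ 4 / θ := by positivity
  have hcs : 0 ≤ (2 + 2 / (1 - θ)) / s := by positivity
  refine ⟨C * K₀, by positivity, fun a W D ha0 ha1 hW0 h₁ h₂ h₃ => ?_⟩
  have hWs : 0 ≤ W ^ s := rpow_nonneg hW0.le s
  have hK₀ : ∀ b ≤ K₀, b ≤ K₀ * (1 + W ^ s) := fun b hb =>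
    hb.trans (le_mul_of_one_le_right (by positivity) (by linarith))
  obtain ⟨b, hDb, hb⟩ : ∃ b, D ≤ C * b ∧ b ≤ K₀ * (1 + W ^ s) := by
    rcases le_or_gt W 1 with hW1 | hW1
    · exact ⟨_, h₁ hW1, hK₀ _ ((nearRegion_le ha0 ha1 hW0 hW1).trans (by linarith))⟩
    rcases le_or_gt (a ^ (1 - θ) * W) 1 with haW | haW
    · exact ⟨_, h₂ hW1 haW, hK₀ _ ((midRegion_le ha0 ha1 hθ0 hW1.le haW).trans (by linarith))⟩
    · refine ⟨_, h₃ hW1 haW, (farRegion_le hW1.le hs hc).trans ?_⟩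
      exact mul_le_mul (by linarith) (by linarith) hWs (by positivity)
  calc D ≤ C * b := hDb
    _ ≤ C * (K₀ * (1 + W ^ s)) := mul_le_mul_of_nonneg_left hb hC
    _ = C * K₀ * (1 + W ^ s) := by ring

lemma tendsto_rpow_mul_abs_log_sq {r : ℝ} (hr : 0 < r) :
    Tendsto (fun a : ℝ => a ^ r * |log (a ^ 2)|) (𝓝[>] 0) (𝓝 0) := by
  have h := ((tendsto_log_mul_rpow_nhdsGT_zero hr).abs.const_mul 2)
  rw [abs_zero, mul_zero] at h
  refine h.congr' (eventually_nhdsWithin_of_forall fun a (ha : 0 < a) => ?_)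
  simp only [abs_log_sq, abs_mul, abs_of_pos (rpow_pos_of_pos ha r)]
  ring

lemma tendsto_rpow_nhdsGT_zero_of_pos {r : ℝ} (hr : 0 < r) :
    Tendsto (fun a : ℝ => a ^ r) (𝓝[>] 0) (𝓝 0) := by
  have h := (continuousAt_rpow_const 0 r (Or.inr hr.le)).tendsto
  rw [zero_rpow hr.ne'] at h
  exact h.mono_left nhdsWithin_le_nhds

lemma tendsto_nearRegion (W : ℝ) :
    Tendsto (fun a : ℝ => a * W * |log (W ^ 2)| + a * W * |log (a ^ 2)| + a * (1 + W))
      (𝓝[>] 0) (𝓝 0) := by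
  have ha : Tendsto (fun a : ℝ => a) (𝓝[>] 0) (𝓝 0) := tendsto_nhdsWithin_of_tendsto_nhds tendsto_id
  have hlog : Tendsto (fun a : ℝ => a * |log (a ^ 2)|) (𝓝[>] 0) (𝓝 0) := by
    simpa using tendsto_rpow_mul_abs_log_sq one_pos
  simpa [mul_right_comm _ W] using
    (((ha.mul_const W).mul_const _).add (hlog.mul_const W)).add (ha.mul_const (1 + W))

lemma tendsto_midRegion {θ : ℝ} (hθ : 0 < θ) (W : ℝ) :
    Tendsto (fun a : ℝ => a ^ θ * log (W ^ 2) + a ^ θ * |log (a ^ 2)| + a ^ θ)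
      (𝓝[>] 0) (𝓝 0) := by
  have ha := tendsto_rpow_nhdsGT_zero_of_pos hθ
  simpa using ((ha.mul_const _).add (tendsto_rpow_mul_abs_log_sq hθ)).add ha

lemma eventually_rpow_mul_le_one {r : ℝ} (hr : 0 < r) (W : ℝ) :
    ∀ᶠ a in 𝓝[>] 0, a ^ r * W ≤ 1 := by
  have h := (tendsto_rpow_nhdsGT_zero_of_pos hr).mul_const W
  rw [zero_mul] at h
  exact h.eventually (ge_mem_nhds one_pos)

lemma tendsto_zero_of_near_mid_bounds {ι : Type*} {F : Filter ι} {a D : ι → ℝ}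
    (ha : Tendsto a F (𝓝[>] 0)) {C θ W : ℝ} (hθ0 : 0 < θ) (hθ1 : θ < 1) (hD : ∀ i, 0 ≤ D i)
    (h₁ : W ≤ 1 → ∀ i, 0 < a i →
      D i ≤ C * (a i * W * |log (W ^ 2)| + a i * W * |log (a i ^ 2)| + a i * (1 + W)))
    (h₂ : 1 < W → ∀ i, 0 < a i → a i ^ (1 - θ) * W ≤ 1 →
      D i ≤ C * (a i ^ θ * log (W ^ 2) + a i ^ θ * |log (a i ^ 2)| + a i ^ θ)) :
    Tendsto D F (𝓝 0) := by
  have hpos : ∀ᶠ i in F, 0 < a i := ha self_mem_nhdsWithin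
  rcases le_or_gt W 1 with hW1 | hW1
  · refine squeeze_zero' (.of_forall hD) (hpos.mono fun i hi => h₁ hW1 i hi) ?_
    simpa using ((tendsto_nearRegion W).comp ha).const_mul C
  · have hsmall := ha.eventually (eventually_rpow_mul_le_one (sub_pos.2 hθ1) W)
    refine squeeze_zero' (.of_forall hD) ((hpos.and hsmall).mono fun i hi => h₂ hW1 i hi.1 hi.2) ?_
    simpa using ((tendsto_midRegion hθ0 W).comp ha).const_mul C

lemma one_add_rpow_le_two_mul {W X Y s : ℝ} (hs : 0 ≤ s) (hW : 0 ≤ W) (hX : 1 ≤ X)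
    (hY : 1 ≤ Y) (hWXY : W ≤ X * Y) : 1 + W ^ s ≤ 2 * (X ^ s * Y ^ s) := by
  have hXs : 1 ≤ X ^ s := one_le_rpow hX hs
  have hYs : 1 ≤ Y ^ s := one_le_rpow hY hs
  have hWs : W ^ s ≤ X ^ s * Y ^ s := by
    rw [← mul_rpow (by linarith) (by linarith)]
    exact rpow_le_rpow hW hWXY hs
  nlinarith

lemma sq_mul_weights_le {K q s ε X Y W D V : ℝ} (hK : 0 ≤ K) (hs : 0 ≤ s) (hX : 1 ≤ X)
    (hY : 1 ≤ Y) (hW : 0 ≤ W) (hWXY : W ≤ X * Y) (hD0 : 0 ≤ D) (hD : D ≤ K * (1 + W ^ s))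
    (hV0 : 0 ≤ V) (hV : V ≤ q * Y ^ (-(4 + ε))) :
    D ^ 2 * V ^ 2 * Y ^ (6 + ε) * X ^ (-(6 + ε)) ≤
      (2 * K) ^ 2 * q ^ 2 * (X ^ (-(6 + ε - 2 * s)) * Y ^ (-(2 + ε - 2 * s))) := by
  have hX0 : 0 < X := by linarith
  have hY0 : 0 < Y := by linarith
  have hD' : D ≤ 2 * K * (X ^ s * Y ^ s) := by
    have := mul_le_mul_of_nonneg_left (one_add_rpow_le_two_mul hs hW hX hY hWXY) hK
    linarith
  have hXexp : X ^ (-(6 + ε - 2 * s)) = (X ^ s) ^ 2 * X ^ (-(6 + ε)) := by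
    rw [← rpow_natCast, ← rpow_mul hX0.le, ← rpow_add hX0]; push_cast; ring_nf
  have hYexp : Y ^ (-(2 + ε - 2 * s)) = (Y ^ s) ^ 2 * (Y ^ (-(4 + ε))) ^ 2 * Y ^ (6 + ε) := by
    rw [← rpow_natCast, ← rpow_natCast, ← rpow_mul hY0.le, ← rpow_mul hY0.le, ← rpow_add hY0,
      ← rpow_add hY0]; push_cast; ring_nf
  rw [hXexp, hYexp]
  have hD2 := pow_le_pow_left₀ hD0 hD' 2
  have hV2 := pow_le_pow_left₀ hV0 hV 2
  calc D ^ 2 * V ^ 2 * Y ^ (6 + ε) * X ^ (-(6 + ε))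
      ≤ (2 * K * (X ^ s * Y ^ s)) ^ 2 * (q * Y ^ (-(4 + ε))) ^ 2 * Y ^ (6 + ε) *
          X ^ (-(6 + ε)) := by gcongr
    _ = _ := by ring

lemma ae_fst_sub_snd_ne_zero {G : Type*} [AddGroup G] [MeasurableSpace G]
    [MeasurableSingletonClass G] [MeasurableSub₂ G] (μ ν : Measure G) [SFinite ν]
    [NullSingletonClass ν] :
    ∀ᵐ p ∂μ.prod ν, p.1 - p.2 ≠ 0 := by
  refine (Measure.ae_prod_iff_ae_ae ?_).2 ?_
  · exact (measurableSet_singleton 0).compl.preimage measurable_sub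
  exact ae_of_all _ fun x => (ν.ae_ne x).mono fun y hy => sub_ne_zero.2 (Ne.symm hy)

lemma tendsto_integral_integral_of_dominated {α β ι : Type*} [MeasurableSpace α]
    [MeasurableSpace β] {μ : Measure α} {ν : Measure β} [SFinite μ] [SFinite ν] {l : Filter ι}
    [l.IsCountablyGenerated] {F : ι → α × β → ℝ} {f : α × β → ℝ} (bound : α × β → ℝ)
    (hF : ∀ i, AEStronglyMeasurable (F i) (μ.prod ν))
    (h_bound : ∀ᶠ i in l, ∀ᵐ p ∂μ.prod ν, ‖F i p‖ ≤ bound p)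
    (bound_integrable : Integrable bound (μ.prod ν))
    (h_lim : ∀ᵐ p ∂μ.prod ν, Tendsto (fun i => F i p) l (𝓝 (f p))) :
    Tendsto (fun i => ∫ x, ∫ y, F i (x, y) ∂ν ∂μ) l (𝓝 (∫ p, f p ∂μ.prod ν)) := by
  refine (tendsto_integral_filter_of_dominated_convergence bound (.of_forall hF) h_bound
    bound_integrable h_lim).congr' (h_bound.mono fun i hi => integral_prod _ ?_)
  exact bound_integrable.mono' (hF i) hi

lemma integrable_one_add_norm_rpow_neg {r : ℝ} (hr : 2 < r) :
    Integrable (fun z : ℂ => (1 + ‖z‖) ^ (-r)) :=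
  integrable_one_add_norm (by rwa [Complex.finrank_real_complex, Nat.cast_ofNat])

noncomputable def sqKernel (g : ℂ → ℂ → ℂ) (v : ℂ → ℂ) (ε : ℝ) (l : ℂ) (p : ℂ × ℂ) : ℝ :=
  ‖g l (p.1 - p.2) - logKer (p.1 - p.2)‖ ^ 2 * ‖v p.2‖ ^ 2 *
    (1 + ‖p.2‖) ^ (6 + ε) * (1 + ‖p.1‖) ^ (-(6 + ε))

lemma sqKernel_nonneg (g : ℂ → ℂ → ℂ) (v : ℂ → ℂ) (ε : ℝ) (l : ℂ) (p : ℂ × ℂ) :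
    0 ≤ sqKernel g v ε l p := by
  unfold sqKernel; positivity

lemma measurable_sqKernel {g : ℂ → ℂ → ℂ} {v : ℂ → ℂ} {l : ℂ} (hg : Measurable (g l))
    (hv : Measurable v) (ε : ℝ) : Measurable (sqKernel g v ε l) := by
  unfold sqKernel logKer
  fun_prop

theorem stmt18_general (g : ℂ → ℂ → ℂ) (v : ℂ → ℂ) (q ε C θ : ℝ)
    (hC : 0 < C) (hθ0 : 0 < θ) (hθ1 : θ < 1)
    (hθε : 2 * θ / (1 - θ) < ε)
    (hgm : ∀ l : ℂ, Measurable (g l)) (hv : Measurable v)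
    (hvb : ∀ z : ℂ, ‖v z‖ ≤ q * (1 + ‖z‖) ^ (-(4 + ε)))
    (hb1 : ∀ l : ℂ, l ≠ 0 → ∀ w : ℂ, w ≠ 0 → ‖w‖ ≤ 1 →
      ‖g l w - logKer w‖ ≤
        C * (‖l‖ * ‖w‖ * |Real.log (‖w‖ ^ 2)| +
          ‖l‖ * ‖w‖ * |Real.log (‖l‖ ^ 2)| +
          ‖l‖ * (1 + ‖w‖)))
    (hb2 : ∀ l : ℂ, l ≠ 0 → ∀ w : ℂ, 1 < ‖w‖ →
      ‖l‖ ^ (1 - θ) * ‖w‖ ≤ 1 →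
      ‖g l w - logKer w‖ ≤
        C * (‖l‖ ^ θ * Real.log (‖w‖ ^ 2) +
          ‖l‖ ^ θ * |Real.log (‖l‖ ^ 2)| + ‖l‖ ^ θ))
    (hb3 : ∀ l : ℂ, l ≠ 0 → ∀ w : ℂ, 1 < ‖w‖ →
      1 < ‖l‖ ^ (1 - θ) * ‖w‖ →
      ‖g l w - logKer w‖ ≤
        C * (‖w‖ ^ (θ / (1 - θ)) + Real.log (‖w‖ ^ 2) +
          (2 / (1 - θ)) * |Real.log (‖w‖)|)) :
    Filter.Tendsto
      (fun l : ℂ => ∫ z : ℂ, ∫ ξ : ℂ,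
        ‖g l (z - ξ) - logKer (z - ξ)‖ ^ 2 * ‖v ξ‖ ^ 2 *
          (1 + ‖ξ‖) ^ (6 + ε) * (1 + ‖z‖) ^ (-(6 + ε)))
      (nhdsWithin 0 {(0 : ℂ)}ᶜ) (nhds 0) := by
  obtain ⟨K, hK0, hK⟩ := exists_le_mul_one_add_rpow hC.le hθ0 hθ1
  set s := θ / (1 - θ)
  have hs : 0 < s := div_pos hθ0 (sub_pos.2 hθ1)
  have h2s : 2 * s < ε := by rwa [← mul_div_assoc]
  set bound : ℂ × ℂ → ℝ := fun p =>
    (2 * K) ^ 2 * q ^ 2 * ((1 + ‖p.1‖) ^ (-(6 + ε - 2 * s)) * (1 + ‖p.2‖) ^ (-(2 + ε - 2 * s)))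
  have hbound : Integrable bound (volume.prod volume) :=
    ((integrable_one_add_norm_rpow_neg (by linarith)).mul_prod
      (integrable_one_add_norm_rpow_neg (by linarith))).const_mul _
  have hdom : ∀ᶠ l in 𝓝[≠] 0,
      ∀ᵐ p ∂(volume : Measure ℂ).prod volume, ‖sqKernel g v ε l p‖ ≤ bound p := by
    filter_upwards [eventually_mem_nhdsWithin,
      nhdsWithin_le_nhds (Metric.closedBall_mem_nhds 0 one_pos)] with l hl hl1
    filter_upwards [ae_fst_sub_snd_ne_zero volume volume] with p hp
    rw [Real.norm_of_nonneg (sqKernel_nonneg g v ε l p)]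
    refine sq_mul_weights_le hK0 hs.le (by simp) (by simp) (norm_nonneg _) ?_ (norm_nonneg _)
      (hK _ _ _ (norm_pos_iff.2 hl) (by simpa using hl1) (norm_pos_iff.2 hp) (hb1 l hl _ hp)
        (hb2 l hl _) (hb3 l hl _)) (norm_nonneg _) (hvb p.2)
    nlinarith [norm_sub_le p.1 p.2, norm_nonneg p.1, norm_nonneg p.2]
  have hlim : ∀ᵐ p ∂(volume : Measure ℂ).prod volume,
      Tendsto (fun l => sqKernel g v ε l p) (𝓝[≠] 0) (𝓝 0) := by
    filter_upwards [ae_fst_sub_snd_ne_zero volume volume] with p hp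
    have h := tendsto_zero_of_near_mid_bounds tendsto_norm_nhdsNE_zero hθ0 hθ1
      (fun l => norm_nonneg (g l (p.1 - p.2) - logKer (p.1 - p.2)))
      (fun h l hl => hb1 l (norm_pos_iff.1 hl) _ hp h)
      (fun h l hl => hb2 l (norm_pos_iff.1 hl) _ h)
    simpa [sqKernel] using (((h.pow 2).mul_const _).mul_const _).mul_const _
  have h := tendsto_integral_integral_of_dominated bound
    (fun l => (measurable_sqKernel (hgm l) hv ε).aestronglyMeasurable) hdom hbound hlim
  rwa [integral_zero] at h

/-- Continuity of the Hilbert–Schmidt family H^r(λ) at λ = 0: given the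
three-region pointwise bounds on g^r(w,λ) - (1/(16π))ln|w|² (with 2θ/(1-θ) < ε)
and the decay of v, the squared Hilbert–Schmidt norm of the kernel difference
tends to 0 as |λ| → 0. -/
theorem stmt18 (g : ℂ → ℂ → ℂ) (v : ℂ → ℂ) (q ε C θ : ℝ)
    (hq : 0 < q) (hε : 0 < ε) (hC : 0 < C) (hθ0 : 0 < θ) (hθ1 : θ < 1)
    (hθε : 2 * θ / (1 - θ) < ε)
    (hgm : ∀ l : ℂ, Measurable (g l)) (hv : Measurable v)
    (hvb : ∀ z : ℂ, ‖v z‖ ≤ q * (1 + ‖z‖) ^ (-(4 + ε)))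
    (hb1 : ∀ l : ℂ, l ≠ 0 → ∀ w : ℂ, w ≠ 0 → ‖w‖ ≤ 1 →
      ‖g l w - logKer w‖ ≤
        C * (‖l‖ * ‖w‖ * |Real.log (‖w‖ ^ 2)| +
          ‖l‖ * ‖w‖ * |Real.log (‖l‖ ^ 2)| +
          ‖l‖ * (1 + ‖w‖)))
    (hb2 : ∀ l : ℂ, l ≠ 0 → ∀ w : ℂ, 1 < ‖w‖ →
      ‖l‖ ^ (1 - θ) * ‖w‖ ≤ 1 →
      ‖g l w - logKer w‖ ≤
        C * (‖l‖ ^ θ * Real.log (‖w‖ ^ 2) +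
          ‖l‖ ^ θ * |Real.log (‖l‖ ^ 2)| + ‖l‖ ^ θ))
    (hb3 : ∀ l : ℂ, l ≠ 0 → ∀ w : ℂ, 1 < ‖w‖ →
      1 < ‖l‖ ^ (1 - θ) * ‖w‖ →
      ‖g l w - logKer w‖ ≤
        C * (‖w‖ ^ (θ / (1 - θ)) + Real.log (‖w‖ ^ 2) +
          (2 / (1 - θ)) * |Real.log (‖w‖)|)) :
    Filter.Tendsto
      (fun l : ℂ => ∫ z : ℂ, ∫ ξ : ℂ,
        ‖g l (z - ξ) - logKer (z - ξ)‖ ^ 2 * ‖v ξ‖ ^ 2 *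
          (1 + ‖ξ‖) ^ (6 + ε) * (1 + ‖z‖) ^ (-(6 + ε)))
      (nhdsWithin 0 {(0 : ℂ)}ᶜ) (nhds 0) :=
  stmt18_general g v q ε C θ hC hθ0 hθ1 hθε hgm hv hvb hb1 hb2 hb3
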